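/- Suppose I = J ∪ H with J, H disjoint and nonempty, and suppose A_{j,h} = A_{h,h} and A_{j,j} = A_{h,j} for all j ∈ J, h ∈ H. If P_J = ∑_{i∈J} α_i x_i is a J-DP and P_H = ∑_{i∈H} α_i x_i is an H-DP for the LV system dx_i/dt = x_i(b_i + ∑_j A_{i,j}x_j), and the common cofactor values agree (i.e. b_i = b for all i ∈ I), then for every pair h ∈ {1,…,m}, j ∈ {1,…,m} of indices of I, condition (C3) holds: α_h(A_{i_h,i_j}−A_{i_j,i_j}) = α_j(A_{i_h,i_h}−A_{i_j,i_h}); in particular P_J + P_H satisfies the coefficient conditions for an I-DP. -/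

import Mathlib

open MvPolynomial

/-- The Lie derivative of a polynomial `P` along the polynomial vector field `f`. -/
noncomputable def lieDeriv {n : ℕ} (f : Fin n → MvPolynomial (Fin n) ℝ)
    (P : MvPolynomial (Fin n) ℝ) : MvPolynomial (Fin n) ℝ :=
  ∑ i, f i * pderiv i P

/-- `P` is a Darboux polynomial for the vector field `f`. -/
def IsDarboux {n : ℕ} (f : Fin n → MvPolynomial (Fin n) ℝ)
    (P : MvPolynomial (Fin n) ℝ) : Prop :=
  ∃ Ccof : MvPolynomial (Fin n) ℝ, lieDeriv f P = Ccof * P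

/-- The Lotka-Volterra vector field `dx_i/dt = x_i (b_i + ∑_j A_{i,j} x_j)`. -/
noncomputable def LV {n : ℕ} (A : Matrix (Fin n) (Fin n) ℝ) (b : Fin n → ℝ) :
    Fin n → MvPolynomial (Fin n) ℝ :=
  fun i => X i * (C (b i) + ∑ j, C (A i j) * X j)

/-!
Both sides of the Darboux identity `Ṗ = K P` (`Ṗ` the Lie derivative along the LV field) are
compared through their second partial derivatives at the origin. For a linear form `P = ∑ αᵢ xᵢ` one has
`∂ₚ∂_q Ṗ(0) = αₚ A_{pq} + α_q A_{qp}` and `∂ₚ∂_q (K P)(0) = αₚ ∂_q K(0) + α_q ∂ₚ K(0)`.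
The diagonal `p = q` gives `∂ₚ K(0) = A_{pp}` whenever `αₚ ≠ 0`, and substituting this into the
off-diagonal equation is exactly (C3). This settles pairs inside `J` and inside `H`; for a pair
straddling `J` and `H`, (C3) is an identity once the coupling conditions are substituted.
-/

section

variable {n : ℕ}

lemma pderiv_sum_C_mul_X {S : Finset (Fin n)} (α : Fin n → ℝ) {q : Fin n} (hq : q ∈ S) :
    pderiv q (∑ i ∈ S, C (α i) * X i) = C (α q) := by
  simp [Pi.single_apply, hq]

lemma lieDeriv_sum_C_mul_X (f : Fin n → MvPolynomial (Fin n) ℝ) (S : Finset (Fin n))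
    (α : Fin n → ℝ) : lieDeriv f (∑ i ∈ S, C (α i) * X i) = ∑ i ∈ S, C (α i) * f i := by
  simp [lieDeriv, Pi.single_apply, mul_comm]

lemma eval_zero_pderiv_pderiv_mul_sum_C_mul_X (Q : MvPolynomial (Fin n) ℝ)
    {S : Finset (Fin n)} (α : Fin n → ℝ) {p q : Fin n} (hp : p ∈ S) (hq : q ∈ S) :
    eval 0 (pderiv p (pderiv q (Q * ∑ i ∈ S, C (α i) * X i))) =
      α p * eval 0 (pderiv q Q) + α q * eval 0 (pderiv p Q) := by
  simp only [Derivation.leibniz, map_add, pderiv_sum_C_mul_X α hp, pderiv_sum_C_mul_X α hq,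
    pderiv_C, smul_eq_mul]
  simp only [eval_zero, mul_zero, map_zero, map_mul, constantCoeff_C, zero_add, map_sum,
    constantCoeff_X, Finset.sum_const_zero, zero_mul]
  ring

lemma eval_zero_pderiv_pderiv_X_mul_affine (i p q : Fin n) (c : ℝ) (m : Fin n → ℝ) :
    eval 0 (pderiv p (pderiv q (X i * (C c + ∑ j, C (m j) * X j)))) =
      (if i = q then m p else 0) + (if i = p then m q else 0) := by
  simp only [Derivation.leibniz, map_add, pderiv_sum_C_mul_X m (Finset.mem_univ _),
    pderiv_C, pderiv_X, Pi.single_apply, smul_eq_mul]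
  split_ifs <;> simp [add_comm]

lemma eval_zero_pderiv_pderiv_lieDeriv_LV (A : Matrix (Fin n) (Fin n) ℝ) (b : Fin n → ℝ)
    {S : Finset (Fin n)} (α : Fin n → ℝ) {p q : Fin n} (hp : p ∈ S) (hq : q ∈ S) :
    eval 0 (pderiv p (pderiv q (lieDeriv (LV A b) (∑ i ∈ S, C (α i) * X i)))) =
      α p * A p q + α q * A q p := by
  rw [lieDeriv_sum_C_mul_X]
  simp only [map_sum, pderiv_C_mul, map_mul, eval_C]
  simp only [LV, eval_zero_pderiv_pderiv_X_mul_affine]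
  simp only [mul_add, Finset.sum_add_distrib, mul_ite, mul_zero, Finset.sum_ite_eq', if_pos hp,
    if_pos hq]
  ring

lemma IsDarboux.LV_linear_C3 {A : Matrix (Fin n) (Fin n) ℝ} {b : Fin n → ℝ}
    {S : Finset (Fin n)} {α : Fin n → ℝ} (hα : ∀ i ∈ S, α i ≠ 0)
    (hP : IsDarboux (LV A b) (∑ i ∈ S, C (α i) * X i)) {p q : Fin n} (hp : p ∈ S) (hq : q ∈ S) :
    α p * (A p q - A q q) = α q * (A p p - A q p) := by
  obtain ⟨K, hK⟩ := hP
  have hessian : ∀ p ∈ S, ∀ q ∈ S, α p * A p q + α q * A q p =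
      α p * eval 0 (pderiv q K) + α q * eval 0 (pderiv p K) := fun p hp q hq => by
    rw [← eval_zero_pderiv_pderiv_lieDeriv_LV A b α hp hq, hK,
      eval_zero_pderiv_pderiv_mul_sum_C_mul_X K α hp hq]
  have hdiag : ∀ r ∈ S, eval 0 (pderiv r K) = A r r := fun r hr =>
    (mul_left_cancel₀ (hα r hr) (by linarith [hessian r hr r hr])).symm
  have hpq := hessian p hp q hq
  rw [hdiag p hp, hdiag q hq] at hpq
  linarith

end

theorem special_solution_general {n : ℕ} (A : Matrix (Fin n) (Fin n) ℝ) (b : Fin n → ℝ)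
    (J H : Finset (Fin n))
    (hcouple : ∀ j ∈ J, ∀ h ∈ H, A j h = A h h ∧ A j j = A h j)
    (α : Fin n → ℝ) (hαJ : ∀ i ∈ J, α i ≠ 0) (hαH : ∀ i ∈ H, α i ≠ 0)
    (hPJ : IsDarboux (LV A b) (∑ i ∈ J, C (α i) * X i))
    (hPH : IsDarboux (LV A b) (∑ i ∈ H, C (α i) * X i)) :
    ∀ p ∈ J ∪ H, ∀ q ∈ J ∪ H,
      α p * (A p q - A q q) = α q * (A p p - A q p) := by
  intro p hp q hq
  rcases Finset.mem_union.1 hp with hpJ | hpH <;> rcases Finset.mem_union.1 hq with hqJ | hqH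
  · exact hPJ.LV_linear_C3 hαJ hpJ hqJ
  · obtain ⟨h₁, h₂⟩ := hcouple p hpJ q hqH
    rw [h₁, h₂]; ring
  · obtain ⟨h₁, h₂⟩ := hcouple q hqJ p hpH
    rw [← h₁, ← h₂]; ring
  · exact hPH.LV_linear_C3 hαH hpH hqH

/-- Prop. 3 (special solution): if `I = J ∪ H` with `J, H` disjoint nonempty,
the coupling conditions `A_{j,h} = A_{h,h}`, `A_{j,j} = A_{h,j}` hold for
`j ∈ J`, `h ∈ H`, the `b_i` are constant on `I`, and `P_J`, `P_H` are
`J`- and `H`-DPs, then condition (C3) holds for all pairs of indices of `I`;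
in particular `P_J + P_H` satisfies the coefficient conditions for an `I`-DP. -/
theorem special_solution {n : ℕ} (A : Matrix (Fin n) (Fin n) ℝ) (b : Fin n → ℝ)
    (J H : Finset (Fin n)) (hd : Disjoint J H) (hJ : J.Nonempty) (hH : H.Nonempty)
    (hcouple : ∀ j ∈ J, ∀ h ∈ H, A j h = A h h ∧ A j j = A h j)
    (b0 : ℝ) (hb : ∀ i ∈ J ∪ H, b i = b0)
    (α : Fin n → ℝ) (hαJ : ∀ i ∈ J, α i ≠ 0) (hαH : ∀ i ∈ H, α i ≠ 0)
    (hPJ : IsDarboux (LV A b) (∑ i ∈ J, C (α i) * X i))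
    (hPH : IsDarboux (LV A b) (∑ i ∈ H, C (α i) * X i)) :
    ∀ p ∈ J ∪ H, ∀ q ∈ J ∪ H,
      α p * (A p q - A q q) = α q * (A p p - A q p) :=
  special_solution_general A b J H hcouple α hαJ hαH hPJ hPH
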